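/- arXiv:1303.4622 — 3 statements merged into one kernel-verified Lean document; each statement's English description precedes it below -/
import Mathlib

section
/- In the lower-triangular array setting, the bottom-right s×s block of the skew-symmetric matrix Q'(θ₀) · Q(θ₀)ᵀ (the block formed by the last s rows and last s columns) equals 𝓤ᵀ − 𝓤, where 𝓤 is the strictly upper-triangular part of Y · L21(θ₀)⁻¹. -/
/-!
Write `S = Q' Qᵀ`, which is skew-symmetric because `Q Qᵀ = 1` is constant. Differentiating
`Q A = [[0, L12], [L21, L22]]` and using `Q' A = S (Q A)` gives, in the bottom-left block,
`S₂₂ L21 + Y = L21'`. Hence `S₂₂ + Y L21⁻¹ = L21' L21⁻¹` is lower triangular, and a skew-symmetric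
matrix whose sum with `M` is lower triangular must be `𝓤ᵀ - 𝓤` for `𝓤` the strictly upper part of `M`.
-/

open Matrix

/-- Strictly lower-triangular part of a square matrix. -/
noncomputable def strictLowerPart {s : ℕ} (M : Matrix (Fin s) (Fin s) ℝ) :
    Matrix (Fin s) (Fin s) ℝ :=
  Matrix.of fun i j => if j < i then M i j else 0

/-- Diagonal part of a square matrix. -/
noncomputable def diagPart {s : ℕ} (M : Matrix (Fin s) (Fin s) ℝ) :
    Matrix (Fin s) (Fin s) ℝ :=
  Matrix.of fun i j => if i = j then M i j else 0

/-- Strictly upper-triangular part of a square matrix. -/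
noncomputable def strictUpperPart {s : ℕ} (M : Matrix (Fin s) (Fin s) ℝ) :
    Matrix (Fin s) (Fin s) ℝ :=
  Matrix.of fun i j => if i < j then M i j else 0

section EntrywiseDeriv

variable {𝕜 : Type*} [NontriviallyNormedField 𝕜] {l m n : Type*}

def HasEntrywiseDerivAt (F : 𝕜 → Matrix m n 𝕜) (F' : Matrix m n 𝕜) (t : 𝕜) : Prop :=
  ∀ i j, HasDerivAt (fun s => F s i j) (F' i j) t

theorem hasEntrywiseDerivAt_const (C : Matrix m n 𝕜) (t : 𝕜) :
    HasEntrywiseDerivAt (fun _ => C) 0 t :=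
  fun _ _ => hasDerivAt_const _ _

namespace HasEntrywiseDerivAt

variable {t : 𝕜}

theorem unique {F : 𝕜 → Matrix m n 𝕜} {F₁' F₂' : Matrix m n 𝕜}
    (h₁ : HasEntrywiseDerivAt F F₁' t) (h₂ : HasEntrywiseDerivAt F F₂' t) : F₁' = F₂' :=
  Matrix.ext fun i j => (h₁ i j).unique (h₂ i j)

theorem transpose {F : 𝕜 → Matrix m n 𝕜} {F' : Matrix m n 𝕜} (h : HasEntrywiseDerivAt F F' t) :
    HasEntrywiseDerivAt (fun s => (F s)ᵀ) F'ᵀ t :=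
  fun i j => h j i

theorem toBlocks₂₁ {m' n' : Type*} {F : 𝕜 → Matrix (m ⊕ m') (n ⊕ n') 𝕜}
    {F' : Matrix (m ⊕ m') (n ⊕ n') 𝕜} (h : HasEntrywiseDerivAt F F' t) :
    HasEntrywiseDerivAt (fun s => (F s).toBlocks₂₁) F'.toBlocks₂₁ t :=
  fun i j => h (Sum.inr i) (Sum.inl j)

theorem mul [Fintype m] {F : 𝕜 → Matrix l m 𝕜} {G : 𝕜 → Matrix m n 𝕜}
    {F' : Matrix l m 𝕜} {G' : Matrix m n 𝕜}
    (hF : HasEntrywiseDerivAt F F' t) (hG : HasEntrywiseDerivAt G G' t) :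
    HasEntrywiseDerivAt (fun s => F s * G s) (F' * G t + F t * G') t := by
  intro i j
  simpa only [mul_apply, Matrix.add_apply, ← Finset.sum_add_distrib] using
    HasDerivAt.fun_sum fun k _ => (hF i k).fun_mul (hG k j)

theorem blockTriangular {α : Type*} [LT α] {b : m → α} {F : 𝕜 → Matrix m m 𝕜}
    {F' : Matrix m m 𝕜} (h : HasEntrywiseDerivAt F F' t) (hF : ∀ s, (F s).BlockTriangular b) :
    F'.BlockTriangular b := fun i j hij =>
  (h i j).unique <| by simpa only [hF _ hij] using hasDerivAt_const t (0 : 𝕜)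

theorem transpose_mul_transpose_eq_neg [Fintype m] [DecidableEq m] {Q : 𝕜 → Matrix m m 𝕜}
    {Q' : Matrix m m 𝕜} (h : HasEntrywiseDerivAt Q Q' t) (horth : ∀ s, Q s * (Q s)ᵀ = 1) :
    (Q' * (Q t)ᵀ)ᵀ = -(Q' * (Q t)ᵀ) := by
  have hsum : Q' * (Q t)ᵀ + Q t * Q'ᵀ = 0 :=
    (h.mul h.transpose).unique (by simpa only [horth] using hasEntrywiseDerivAt_const 1 t)
  rw [transpose_mul, transpose_transpose, eq_neg_of_add_eq_zero_right hsum]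

end HasEntrywiseDerivAt

end EntrywiseDeriv

theorem toBlocks₂₁_mul_fromBlocks_zero {R m n p q : Type*} [Fintype m] [Fintype n]
    [NonUnitalNonAssocSemiring R] (S : Matrix (m ⊕ n) (m ⊕ n) R) (B : Matrix m q R)
    (C : Matrix n p R) (D : Matrix n q R) :
    (S * fromBlocks 0 B C D).toBlocks₂₁ = S.toBlocks₂₂ * C := by
  ext i j
  simp [mul_apply, Fintype.sum_sum_type, toBlocks₂₁, toBlocks₂₂]

theorem eq_transpose_strictUpperPart_sub {s : ℕ} {K M : Matrix (Fin s) (Fin s) ℝ}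
    (hK : Kᵀ = -K) (hKM : (K + M).IsLowerTriangular) :
    K = (strictUpperPart M)ᵀ - strictUpperPart M := by
  have hupper {i j : Fin s} (hij : i < j) : K i j = -M i j :=
    eq_neg_of_add_eq_zero_left (hKM hij)
  have hskew (i j : Fin s) : K j i = -K i j := congrFun (congrFun hK i) j
  ext i j
  rcases lt_trichotomy i j with hij | rfl | hij
  · simp [strictUpperPart, hupper hij, hij, hij.not_gt]
  · simp [strictUpperPart, CharZero.eq_neg_self_iff.mp (hskew i i)]
  · simp [strictUpperPart, hskew j i, hupper hij, hij, hij.not_gt]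

theorem lowerTriangularCase_block22_of_skew_general
    (s k l : ℕ)
    (A A' : ℝ → Matrix (Fin k ⊕ Fin s) (Fin s ⊕ Fin l) ℝ)
    (Q Q' : ℝ → Matrix (Fin k ⊕ Fin s) (Fin k ⊕ Fin s) ℝ)
    (hA : ∀ θ i j, HasDerivAt (fun t => A t i j) (A' θ i j) θ)
    (hQ : ∀ θ i j, HasDerivAt (fun t => Q t i j) (Q' θ i j) θ)
    (hQorth : ∀ θ, Q θ * (Q θ)ᵀ = 1)
    (L12 : ℝ → Matrix (Fin k) (Fin l) ℝ)
    (L21 : ℝ → Matrix (Fin s) (Fin s) ℝ)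
    (L22 : ℝ → Matrix (Fin s) (Fin l) ℝ)
    (hblock : ∀ θ, Q θ * A θ = Matrix.fromBlocks 0 (L12 θ) (L21 θ) (L22 θ))
    (hlow : ∀ θ (i j : Fin s), i < j → L21 θ i j = 0)
    (hinv : ∀ θ, IsUnit (L21 θ))
    (θ₀ : ℝ)
    (X : Matrix (Fin k) (Fin s) ℝ) (N : Matrix (Fin k) (Fin l) ℝ)
    (Y : Matrix (Fin s) (Fin s) ℝ) (V : Matrix (Fin s) (Fin l) ℝ)
    (hXNYV : Q θ₀ * A' θ₀ = Matrix.fromBlocks X N Y V) :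
    (Q' θ₀ * (Q θ₀)ᵀ).toBlocks₂₂
      = (strictUpperPart (Y * (L21 θ₀)⁻¹))ᵀ - strictUpperPart (Y * (L21 θ₀)⁻¹) := by
  set S := Q' θ₀ * (Q θ₀)ᵀ
  have hQ₀ : HasEntrywiseDerivAt Q (Q' θ₀) θ₀ := hQ θ₀
  have hS : Sᵀ = -S := hQ₀.transpose_mul_transpose_eq_neg hQorth
  have hQ'A : Q' θ₀ * A θ₀ = S * (Q θ₀ * A θ₀) := by
    rw [Matrix.mul_assoc, ← Matrix.mul_assoc (Q θ₀)ᵀ, mul_eq_one_comm.mp (hQorth θ₀), Matrix.one_mul]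
  have hL : HasEntrywiseDerivAt (fun θ => fromBlocks 0 (L12 θ) (L21 θ) (L22 θ))
      (S * fromBlocks 0 (L12 θ₀) (L21 θ₀) (L22 θ₀) + fromBlocks X N Y V) θ₀ := by
    simpa only [hblock, hQ'A, hXNYV] using hQ₀.mul (hA θ₀)
  have hL21 : HasEntrywiseDerivAt L21 (S.toBlocks₂₂ * L21 θ₀ + Y) θ₀ := by
    convert (by simpa only [toBlocks_fromBlocks₂₁] using hL.toBlocks₂₁) using 1
    rw [← toBlocks₂₁_mul_fromBlocks_zero S (L12 θ₀) (L21 θ₀) (L22 θ₀)]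
    rfl
  have hlower (θ : ℝ) : (L21 θ).IsLowerTriangular := fun _ _ h => hlow θ _ _ h
  have : Invertible (L21 θ₀) := (hinv θ₀).invertible
  refine eq_transpose_strictUpperPart_sub (congrArg toBlocks₂₂ hS) ?_
  rw [← mul_inv_cancel_right_of_invertible (L21 θ₀) S.toBlocks₂₂, ← Matrix.add_mul]
  exact (hL21.blockTriangular hlower).mul (blockTriangular_inv_of_blockTriangular (hlower θ₀))

/-- Lower triangular array case: the bottom-right `s × s` block of the skew-symmetric
matrix `Q' θ₀ * (Q θ₀)ᵀ` equals `𝓤ᵀ − 𝓤`, where `𝓤` is the strictly upper-triangular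
part of `Y * (L21 θ₀)⁻¹`. -/
theorem lowerTriangularCase_block22_of_skew
    (s k l : ℕ) (hs : 0 < s)
    (A A' : ℝ → Matrix (Fin k ⊕ Fin s) (Fin s ⊕ Fin l) ℝ)
    (Q Q' : ℝ → Matrix (Fin k ⊕ Fin s) (Fin k ⊕ Fin s) ℝ)
    (hA : ∀ θ i j, HasDerivAt (fun t => A t i j) (A' θ i j) θ)
    (hQ : ∀ θ i j, HasDerivAt (fun t => Q t i j) (Q' θ i j) θ)
    (hQorth : ∀ θ, Q θ * (Q θ)ᵀ = 1)
    (L12 : ℝ → Matrix (Fin k) (Fin l) ℝ)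
    (L21 : ℝ → Matrix (Fin s) (Fin s) ℝ)
    (L22 : ℝ → Matrix (Fin s) (Fin l) ℝ)
    (hblock : ∀ θ, Q θ * A θ = Matrix.fromBlocks 0 (L12 θ) (L21 θ) (L22 θ))
    (hlow : ∀ θ (i j : Fin s), i < j → L21 θ i j = 0)
    (hinv : ∀ θ, IsUnit (L21 θ))
    (θ₀ : ℝ)
    (X : Matrix (Fin k) (Fin s) ℝ) (N : Matrix (Fin k) (Fin l) ℝ)
    (Y : Matrix (Fin s) (Fin s) ℝ) (V : Matrix (Fin s) (Fin l) ℝ)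
    (hXNYV : Q θ₀ * A' θ₀ = Matrix.fromBlocks X N Y V) :
    (Q' θ₀ * (Q θ₀)ᵀ).toBlocks₂₂
      = (strictUpperPart (Y * (L21 θ₀)⁻¹))ᵀ - strictUpperPart (Y * (L21 θ₀)⁻¹) :=
  lowerTriangularCase_block22_of_skew_general s k l A A' Q Q' hA hQ hQorth L12 L21 L22 hblock hlow
    hinv θ₀ X N Y V hXNYV
end

section
/- In the upper-triangular array setting, the top-left s×s block of the skew-symmetric matrix Q'(θ₀) · Q(θ₀)ᵀ (the block formed by the first s rows and first s columns) equals 𝓛ᵀ − 𝓛, where 𝓛 is the strictly lower-triangular part of X · R11(θ₀)⁻¹. -/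
open Matrix

/-
Write `S = Q' Qᵀ`. Differentiating `Q Qᵀ = 1` shows that `S` is skew-symmetric, and
differentiating `Q A = [R11 R12; 0 R22]` gives `Q' A + Q A' = S (Q A) + Q A'`, whose top-left
block `S₁₁ R11 + X` is the derivative of the upper-triangular `R11`, hence upper triangular.
Thus `S₁₁ = R11' R11⁻¹ - X R11⁻¹` with `R11' R11⁻¹` upper triangular, so the strictly lower part of
`S₁₁` is `-𝓛`; skew-symmetry then determines the rest of `S₁₁`.
-/

section Derivatives

variable {𝕜 : Type*} [NontriviallyNormedField 𝕜] {m n p : Type*}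

theorem Matrix.hasDerivAt_mul_apply [Fintype n] {F : 𝕜 → Matrix m n 𝕜} {G : 𝕜 → Matrix n p 𝕜}
    {F' : Matrix m n 𝕜} {G' : Matrix n p 𝕜} {x : 𝕜}
    (hF : ∀ i j, HasDerivAt (fun t => F t i j) (F' i j) x)
    (hG : ∀ i j, HasDerivAt (fun t => G t i j) (G' i j) x) (i : m) (j : p) :
    HasDerivAt (fun t => (F t * G t) i j) ((F' * G x + F x * G') i j) x := by
  simp only [mul_apply, add_apply, ← Finset.sum_add_distrib]
  exact HasDerivAt.fun_sum fun k _ => (hF i k).mul (hG k j)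

theorem Matrix.transpose_mul_transpose_eq_neg_of_mul_transpose_eq_one [Fintype n] [DecidableEq m]
    {Q : 𝕜 → Matrix m n 𝕜} {Q' : Matrix m n 𝕜} {x : 𝕜}
    (hQ : ∀ i j, HasDerivAt (fun t => Q t i j) (Q' i j) x)
    (horth : ∀ᶠ t in nhds x, Q t * (Q t)ᵀ = 1) :
    (Q' * (Q x)ᵀ)ᵀ = -(Q' * (Q x)ᵀ) := by
  ext i j
  have hderiv :=
    hasDerivAt_mul_apply (G := fun t => (Q t)ᵀ) (G' := Q'ᵀ) hQ (fun a b => hQ b a) j i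
  have hconst : HasDerivAt (fun t => (Q t * (Q t)ᵀ) j i) 0 x :=
    (hasDerivAt_const x ((1 : Matrix m m 𝕜) j i)).congr_of_eventuallyEq
      (horth.mono fun _ ht => congrFun (congrFun ht j) i)
  have hsum := hderiv.unique hconst
  rw [add_apply, ← transpose_apply (Q x * Q'ᵀ), transpose_mul, transpose_transpose] at hsum
  rw [neg_apply, transpose_apply]
  linear_combination hsum

theorem Matrix.BlockTriangular.of_hasDerivAt {α : Type*} [LT α] {b : m → α}
    {F : 𝕜 → Matrix m m 𝕜} {F' : Matrix m m 𝕜} {x : 𝕜}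
    (hF : ∀ i j, HasDerivAt (fun t => F t i j) (F' i j) x)
    (htri : ∀ᶠ t in nhds x, (F t).BlockTriangular b) : F'.BlockTriangular b := fun i j hij =>
  (hF i j).unique <| (hasDerivAt_const x 0).congr_of_eventuallyEq
    (htri.mono fun _ ht => ht hij)

end Derivatives

theorem Matrix.toBlocks₁₁_mul_fromBlocks_zero {R : Type*} [NonUnitalNonAssocSemiring R]
    {l m n o p q : Type*} [Fintype l] [Fintype m] (M : Matrix (n ⊕ q) (l ⊕ m) R)
    (A : Matrix l o R) (B : Matrix l p R) (D : Matrix m p R) :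
    (M * fromBlocks A B 0 D).toBlocks₁₁ = M.toBlocks₁₁ * A := by
  ext i j
  simp [toBlocks₁₁, mul_apply, Fintype.sum_sum_type]

section TriangularParts

variable {s : ℕ}

theorem strictLowerPart_eq_neg_of_blockTriangular {S X T : Matrix (Fin s) (Fin s) ℝ}
    (hT : T.BlockTriangular id) (h : S = T - X) : strictLowerPart S = -strictLowerPart X := by
  ext i j
  by_cases hij : j < i
  · simp [strictLowerPart, h, hij, hT hij]
  · simp [strictLowerPart, hij]

theorem eq_strictLowerPart_sub_transpose_of_transpose_eq_neg {S : Matrix (Fin s) (Fin s) ℝ}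
    (hS : Sᵀ = -S) : S = strictLowerPart S - (strictLowerPart S)ᵀ := by
  have hskew : ∀ i j, S j i = -S i j := fun i j => congrFun (congrFun hS i) j
  ext i j
  rcases lt_trichotomy i j with hij | rfl | hij
  · simp [strictLowerPart, hij, hij.not_gt, hskew i j]
  · have hdiag : S i i = 0 := by linarith [hskew i i]
    simp [strictLowerPart, hdiag]
  · simp [strictLowerPart, hij, hij.not_gt]

theorem eq_transpose_strictLowerPart_sub_of_mul_add_eq {S R T X : Matrix (Fin s) (Fin s) ℝ}
    (hS : Sᵀ = -S) (hR : R.BlockTriangular id) (hRinv : IsUnit R) (hT : T.BlockTriangular id)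
    (h : S * R + X = T) :
    S = (strictLowerPart (X * R⁻¹))ᵀ - strictLowerPart (X * R⁻¹) := by
  have : Invertible R := hRinv.invertible
  have hTR : (T * R⁻¹).BlockTriangular id := hT.mul (blockTriangular_inv_of_blockTriangular hR)
  have hSeq : S = T * R⁻¹ - X * R⁻¹ := by
    rw [← h, add_mul, mul_inv_cancel_right_of_invertible, add_sub_cancel_right]
  have hlow := strictLowerPart_eq_neg_of_blockTriangular hTR hSeq
  rw [eq_strictLowerPart_sub_transpose_of_transpose_eq_neg hS, hlow, transpose_neg]
  abel

end TriangularParts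

theorem upperTriangularCase_block11_of_skew_general
    (s k l : ℕ)
    (A A' : ℝ → Matrix (Fin s ⊕ Fin k) (Fin s ⊕ Fin l) ℝ)
    (Q Q' : ℝ → Matrix (Fin s ⊕ Fin k) (Fin s ⊕ Fin k) ℝ)
    (hA : ∀ θ i j, HasDerivAt (fun t => A t i j) (A' θ i j) θ)
    (hQ : ∀ θ i j, HasDerivAt (fun t => Q t i j) (Q' θ i j) θ)
    (hQorth : ∀ θ, Q θ * (Q θ)ᵀ = 1)
    (R11 : ℝ → Matrix (Fin s) (Fin s) ℝ)
    (R12 : ℝ → Matrix (Fin s) (Fin l) ℝ)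
    (R22 : ℝ → Matrix (Fin k) (Fin l) ℝ)
    (hblock : ∀ θ, Q θ * A θ = Matrix.fromBlocks (R11 θ) (R12 θ) 0 (R22 θ))
    (hupp : ∀ θ (i j : Fin s), j < i → R11 θ i j = 0)
    (hinv : ∀ θ, IsUnit (R11 θ))
    (θ₀ : ℝ)
    (X : Matrix (Fin s) (Fin s) ℝ) (N : Matrix (Fin s) (Fin l) ℝ)
    (Y : Matrix (Fin k) (Fin s) ℝ) (V : Matrix (Fin k) (Fin l) ℝ)
    (hXNYV : Q θ₀ * A' θ₀ = Matrix.fromBlocks X N Y V) :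
    (Q' θ₀ * (Q θ₀)ᵀ).toBlocks₁₁
      = (strictLowerPart (X * (R11 θ₀)⁻¹))ᵀ - strictLowerPart (X * (R11 θ₀)⁻¹) := by
  have hQ'A : Q' θ₀ * A θ₀ = Q' θ₀ * (Q θ₀)ᵀ * (Q θ₀ * A θ₀) := by
    rw [Matrix.mul_assoc, ← Matrix.mul_assoc (Q θ₀)ᵀ, mul_eq_one_comm.mp (hQorth θ₀),
      Matrix.one_mul]
  have hR11 : ∀ i j, HasDerivAt (fun t => R11 t i j)
      ((Q' θ₀ * A θ₀ + Q θ₀ * A' θ₀).toBlocks₁₁ i j) θ₀ := fun i j => by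
    have h := hasDerivAt_mul_apply (hQ θ₀) (hA θ₀) (Sum.inl i) (Sum.inl j)
    simp only [hblock, fromBlocks_apply₁₁] at h
    exact h
  have hT := BlockTriangular.of_hasDerivAt hR11
    (Filter.Eventually.of_forall fun t _ _ => hupp t _ _)
  set S := Q' θ₀ * (Q θ₀)ᵀ
  have hTeq : S.toBlocks₁₁ * R11 θ₀ + X = (Q' θ₀ * A θ₀ + Q θ₀ * A' θ₀).toBlocks₁₁ := by
    rw [hQ'A, hblock, hXNYV]
    exact congrArg₂ (· + ·) (toBlocks₁₁_mul_fromBlocks_zero ..).symm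
      (toBlocks_fromBlocks₁₁ X N Y V).symm
  have hS : Sᵀ = -S := transpose_mul_transpose_eq_neg_of_mul_transpose_eq_one (hQ θ₀)
    (Filter.Eventually.of_forall hQorth)
  have hSblock : S.toBlocks₁₁ᵀ = -S.toBlocks₁₁ := by
    ext i j
    exact congrFun (congrFun hS (Sum.inl i)) (Sum.inl j)
  exact eq_transpose_strictLowerPart_sub_of_mul_add_eq hSblock (fun _ _ => hupp θ₀ _ _)
    (hinv θ₀) hT hTeq

/-- Upper triangular array case: the top-left `s × s` block of the skew-symmetric matrix
`Q' θ₀ * (Q θ₀)ᵀ` equals `𝓛ᵀ − 𝓛`, where `𝓛` is the strictly lower-triangular part of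
`X * (R11 θ₀)⁻¹`. -/
theorem upperTriangularCase_block11_of_skew
    (s k l : ℕ) (hs : 0 < s)
    (A A' : ℝ → Matrix (Fin s ⊕ Fin k) (Fin s ⊕ Fin l) ℝ)
    (Q Q' : ℝ → Matrix (Fin s ⊕ Fin k) (Fin s ⊕ Fin k) ℝ)
    (hA : ∀ θ i j, HasDerivAt (fun t => A t i j) (A' θ i j) θ)
    (hQ : ∀ θ i j, HasDerivAt (fun t => Q t i j) (Q' θ i j) θ)
    (hQorth : ∀ θ, Q θ * (Q θ)ᵀ = 1)
    (R11 : ℝ → Matrix (Fin s) (Fin s) ℝ)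
    (R12 : ℝ → Matrix (Fin s) (Fin l) ℝ)
    (R22 : ℝ → Matrix (Fin k) (Fin l) ℝ)
    (hblock : ∀ θ, Q θ * A θ = Matrix.fromBlocks (R11 θ) (R12 θ) 0 (R22 θ))
    (hupp : ∀ θ (i j : Fin s), j < i → R11 θ i j = 0)
    (hinv : ∀ θ, IsUnit (R11 θ))
    (θ₀ : ℝ)
    (X : Matrix (Fin s) (Fin s) ℝ) (N : Matrix (Fin s) (Fin l) ℝ)
    (Y : Matrix (Fin k) (Fin s) ℝ) (V : Matrix (Fin k) (Fin l) ℝ)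
    (hXNYV : Q θ₀ * A' θ₀ = Matrix.fromBlocks X N Y V) :
    (Q' θ₀ * (Q θ₀)ᵀ).toBlocks₁₁
      = (strictLowerPart (X * (R11 θ₀)⁻¹))ᵀ - strictLowerPart (X * (R11 θ₀)⁻¹) :=
  upperTriangularCase_block11_of_skew_general s k l A A' Q Q' hA hQ hQorth R11 R12 R22 hblock hupp
    hinv θ₀ X N Y V hXNYV
end

section
/- In the square-root covariance filter array setting, the (1,2) block of the post-array encodes the normalized Kalman gain: Sᵀ · T = H · P · Fᵀ; in particular, if S is invertible then Tᵀ = F · P · Hᵀ · S⁻¹. -/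
open Matrix

/-! Left multiplication by an orthogonal `Θ` preserves the Gram matrix `Aᵀ * A` of the
pre-array `A`. Reading off the block of the Gram matrix that pairs the first `m` columns with
the last `n` columns gives `(Psqrt * Hᵀ)ᵀ * (Psqrt * Fᵀ) = H * P * Fᵀ` for the pre-array and
`Sᵀ * T` for the post-array; all other contributions meet a zero block. -/

namespace Matrix

variable {R : Type*} {k l m n n₁ n₂ : Type*}

theorem transpose_mul_self_eq_of_orthogonal_mul_eq [CommSemiring R] [Fintype k] [DecidableEq k]
    {Θ : Matrix k k R} (hΘ : Θᵀ * Θ = 1) {A B : Matrix k n R} (h : Θ * A = B) :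
    Aᵀ * A = Bᵀ * B := by
  rw [← h, transpose_mul, Matrix.mul_assoc, ← Matrix.mul_assoc Θᵀ, hΘ, Matrix.one_mul]

theorem fromRows_fromCols_eq_fromCols_fromRows (A₁₁ : Matrix l n₁ R) (A₁₂ : Matrix l n₂ R)
    (A₂₁ : Matrix m n₁ R) (A₂₂ : Matrix m n₂ R) :
    fromRows (fromCols A₁₁ A₁₂) (fromCols A₂₁ A₂₂) =
      fromCols (fromRows A₁₁ A₂₁) (fromRows A₁₂ A₂₂) := by
  rw [fromRows_fromCols_eq_fromBlocks, fromCols_fromRows_eq_fromBlocks]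

theorem transpose_fromRows_mul_fromRows [Semiring R] [Fintype l] [Fintype m]
    (A₁ : Matrix l n₁ R) (A₂ : Matrix m n₁ R) (B₁ : Matrix l n₂ R) (B₂ : Matrix m n₂ R) :
    (fromRows A₁ A₂)ᵀ * fromRows B₁ B₂ = A₁ᵀ * B₁ + A₂ᵀ * B₂ := by
  rw [transpose_fromRows, fromCols_mul_fromRows]

theorem toBlocks₁₂_transpose_fromCols_mul_fromCols [Semiring R] [Fintype k]
    (A₁ : Matrix k n₁ R) (A₂ : Matrix k n₂ R) (B₁ : Matrix k n₁ R) (B₂ : Matrix k n₂ R) :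
    ((fromCols A₁ A₂)ᵀ * fromCols B₁ B₂).toBlocks₁₂ = A₁ᵀ * B₂ := by
  rw [transpose_fromCols, fromRows_mul_fromCols, toBlocks_fromBlocks₁₂]

theorem transpose_eq_mul_nonsing_inv_of_transpose_mul_eq [CommRing R] [Fintype m]
    [DecidableEq m] {S : Matrix m m R} {T K : Matrix m n R} (hS : IsUnit S) (h : Sᵀ * T = K) :
    Tᵀ = Kᵀ * S⁻¹ := by
  rw [← h, transpose_mul, transpose_transpose, Matrix.mul_assoc,
    mul_nonsing_inv S ((isUnit_iff_isUnit_det S).mp hS), Matrix.mul_one]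

end Matrix

theorem srcf_normalized_gain_general
    (n m q : ℕ)
    (F : Matrix (Fin n) (Fin n) ℝ) (H : Matrix (Fin m) (Fin n) ℝ)
    (G : Matrix (Fin n) (Fin q) ℝ)
    (Psqrt : Matrix (Fin n) (Fin n) ℝ) (Rsqrt : Matrix (Fin m) (Fin m) ℝ)
    (Qwsqrt : Matrix (Fin q) (Fin q) ℝ)
    (Θ : Matrix ((Fin m ⊕ Fin n) ⊕ Fin q) ((Fin m ⊕ Fin n) ⊕ Fin q) ℝ)
    (hΘ : Θᵀ * Θ = 1)
    (S : Matrix (Fin m) (Fin m) ℝ) (T : Matrix (Fin m) (Fin n) ℝ)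
    (M : Matrix (Fin n) (Fin n) ℝ)
    (harray : Θ * Matrix.fromRows
        (Matrix.fromRows (Matrix.fromCols Rsqrt 0)
          (Matrix.fromCols (Psqrt * Hᵀ) (Psqrt * Fᵀ)))
        (Matrix.fromCols 0 (Qwsqrt * Gᵀ))
      = Matrix.fromRows
        (Matrix.fromRows (Matrix.fromCols S T) (Matrix.fromCols 0 M))
        (Matrix.fromCols 0 0)) :
    Sᵀ * T = H * (Psqrtᵀ * Psqrt) * Fᵀ ∧
      (IsUnit S → Tᵀ = F * (Psqrtᵀ * Psqrt) * Hᵀ * S⁻¹) := by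
  simp only [fromRows_fromCols_eq_fromCols_fromRows] at harray
  have hblock := congrArg toBlocks₁₂ (transpose_mul_self_eq_of_orthogonal_mul_eq hΘ harray)
  simp only [toBlocks₁₂_transpose_fromCols_mul_fromCols, transpose_fromRows_mul_fromRows,
    transpose_zero, Matrix.zero_mul, Matrix.mul_zero, add_zero, zero_add] at hblock
  have hgain : Sᵀ * T = H * (Psqrtᵀ * Psqrt) * Fᵀ := by
    rw [← hblock, transpose_mul, transpose_transpose]
    simp only [Matrix.mul_assoc]
  refine ⟨hgain, fun hS => ?_⟩
  rw [transpose_eq_mul_nonsing_inv_of_transpose_mul_eq hS hgain]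
  simp only [transpose_mul, transpose_transpose, Matrix.mul_assoc]

/-- Square-root covariance filter array: the (1,2) block of the post-array encodes the
normalized Kalman gain, `Sᵀ * T = H * P * Fᵀ`; in particular, if `S` is invertible then
`Tᵀ = F * P * Hᵀ * S⁻¹`. -/
theorem srcf_normalized_gain
    (n m q : ℕ) (hn : 0 < n) (hm : 0 < m) (hq : 0 < q)
    (F : Matrix (Fin n) (Fin n) ℝ) (H : Matrix (Fin m) (Fin n) ℝ)
    (G : Matrix (Fin n) (Fin q) ℝ)
    (Psqrt : Matrix (Fin n) (Fin n) ℝ) (Rsqrt : Matrix (Fin m) (Fin m) ℝ)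
    (Qwsqrt : Matrix (Fin q) (Fin q) ℝ)
    (Θ : Matrix ((Fin m ⊕ Fin n) ⊕ Fin q) ((Fin m ⊕ Fin n) ⊕ Fin q) ℝ)
    (hΘ : Θᵀ * Θ = 1)
    (S : Matrix (Fin m) (Fin m) ℝ) (T : Matrix (Fin m) (Fin n) ℝ)
    (M : Matrix (Fin n) (Fin n) ℝ)
    (harray : Θ * Matrix.fromRows
        (Matrix.fromRows (Matrix.fromCols Rsqrt 0)
          (Matrix.fromCols (Psqrt * Hᵀ) (Psqrt * Fᵀ)))
        (Matrix.fromCols 0 (Qwsqrt * Gᵀ))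
      = Matrix.fromRows
        (Matrix.fromRows (Matrix.fromCols S T) (Matrix.fromCols 0 M))
        (Matrix.fromCols 0 0)) :
    Sᵀ * T = H * (Psqrtᵀ * Psqrt) * Fᵀ ∧
      (IsUnit S → Tᵀ = F * (Psqrtᵀ * Psqrt) * Hᵀ * S⁻¹) :=
  srcf_normalized_gain_general n m q F H G Psqrt Rsqrt Qwsqrt Θ hΘ S T M harray
end
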